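/- Let φ₄ᵗ be the sequence obtained by wreathing of order 3 the projected hexagonal sequence K_t over {1,2,3} with the circular sequence Z(3, 3^{t-1}) over {4,5,6} with base word 456; i.e., φ₄ᵗ alternates blocks of 3 consecutive terms of K_t with blocks of 3 consecutive terms of Z(3,3^{t-1}). Then every 5 consecutive terms of φ₄ᵗ are pairwise distinct. -/

import Mathlib

/-- The hexagonal morphism `κ` on the auxiliary alphabet `{1̄,1̲,2̄,2̲,3̄,3̲}`,
encoded as `Fin 6` via `0=1̄, 1=1̲, 2=2̄, 3=2̲, 4=3̄, 5=3̲`: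
`κ(1̄)=1̄2̲3̄, κ(2̄)=2̄3̲1̄, κ(3̄)=3̄1̲2̄, κ(1̲)=3̲2̄1̲, κ(2̲)=1̲3̄2̲, κ(3̲)=2̲1̄3̲`. -/
def hexKappa : Fin 6 → List (Fin 6) :=
  ![[0, 3, 4], [5, 2, 1], [2, 5, 0], [1, 4, 3], [4, 1, 2], [3, 0, 5]]

/-- The projection `π` sending both `ā` and `a̲` to `a`, with `{1,2,3}` encoded as `Fin 3`
via `0=1, 1=2, 2=3`. -/
def hexPi : Fin 6 → Fin 3 := ![0, 0, 1, 1, 2, 2]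

/-- The `t`-fold iterate `κ^t(1̄)` as a word over the auxiliary alphabet. -/
def hexIter : ℕ → List (Fin 6)
  | 0 => [0]
  | t + 1 => (hexIter t).flatMap hexKappa

/-- The sequence `K_t = π(κ^t(1̄))`. -/
def hexK (t : ℕ) : List (Fin 3) := (hexIter t).map hexPi

/-- The circular sequence `Z(ℓ,t)` over base word `φ` (with `ℓ = φ.length`):
`t` copies of `φ⁰φ¹⋯φ^{ℓ-1}`, where `φⁱ` is the cyclic `i`-shift of `φ`. -/
def circSeq {α : Type*} (φ : List α) (t : ℕ) : List α :=
  (List.range t).flatMap fun _ => (List.range φ.length).flatMap fun i => φ.rotate i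

/-- Wreathing with `n` rounds: alternately take blocks of `l` consecutive terms from the
base and the wrap. -/
def wreathAux {α : Type*} (l : ℕ) : ℕ → List α → List α → List α
  | 0, _, _ => []
  | n + 1, a, b => a.take l ++ b.take l ++ wreathAux l n (a.drop l) (b.drop l)

/-- The sequence `φ₄ᵗ = K_t ≀₃ Z(3, 3^(t-1))`, with `K_t` taken over `{1,2,3}` and the
circular sequence over `{4,5,6}` with base word `456`. -/
def phi4 (t : ℕ) : List ℕ :=
  wreathAux 3 (3 ^ (t - 1)) ((hexK t).map fun x => (x : ℕ) + 1)
    (circSeq [4, 5, 6] (3 ^ (t - 1)))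

/-!
Both `K_t` and `Z(3, 3^(t-1))` split into blocks of three distinct letters, and neither repeats a
letter across the boundary of two consecutive blocks: for `Z` because consecutive blocks are
consecutive shifts of `456`, for `K_t = π(κ(κ^(t-1)(1̄)))` because consecutive letters of
`κ^(t-1)(1̄)` always differ both in letter and in decoration (a property `κ` preserves), which
forces the last letter of one `κ`-image and the first letter of the next to project differently.
As the two alphabets are disjoint, a window of five letters of the wreath can only repeat a letter
of an adjacent block of the same sequence, and this is excluded by the boundary condition.
-/

namespace List

variable {α β : Type*}

def WindowNodup (m : ℕ) (w : List α) : Prop :=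
  ∀ j, ((w.drop j).take m).Nodup

theorem windowNodup_iff_lt_length {m : ℕ} {w : List α} :
    WindowNodup m w ↔ ∀ j < w.length, ((w.drop j).take m).Nodup := by
  refine ⟨fun h j _ => h j, fun h j => ?_⟩
  rcases lt_or_ge j w.length with hj | hj
  · exact h j hj
  · simp [drop_eq_nil_of_le hj]

instance [DecidableEq α] (m : ℕ) (w : List α) : Decidable (WindowNodup m w) :=
  decidable_of_iff _ windowNodup_iff_lt_length.symm

/-- A window starting inside `u` reaches at most `m - 1` letters into `v`. -/
theorem WindowNodup.append {m : ℕ} {u v : List α} (huv : WindowNodup m (u ++ v.take (m - 1)))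
    (hv : WindowNodup m v) : WindowNodup m (u ++ v) := by
  intro j
  rcases lt_or_ge j u.length with hj | hj
  · have hwin : ((u ++ v).drop j).take m = ((u ++ v.take (m - 1)).drop j).take m := by
      simp only [drop_append, take_append, take_take, length_drop, Nat.sub_eq_zero_of_le hj.le,
        drop_zero]
      congr 2
      omega
    exact hwin ▸ huv j
  · rw [drop_append, drop_eq_nil_of_le hj, nil_append]
    exact hv _

theorem IsChain.windowNodup_flatMap {R : β → β → Prop} {f : β → List α} {m : ℕ}
    (hlen : ∀ x, m - 1 ≤ (f x).length) (hf : ∀ x, WindowNodup m (f x))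
    (hR : ∀ x y, R x y → WindowNodup m (f x ++ (f y).take (m - 1))) :
    ∀ {l : List β}, IsChain R l → WindowNodup m (l.flatMap f)
  | [], _ => fun j => by simp
  | [x], _ => by simpa using hf x
  | x :: y :: l, h => by
    rw [flatMap_cons]
    refine WindowNodup.append ?_ (IsChain.windowNodup_flatMap hlen hf hR h.tail)
    rw [flatMap_cons, take_append_of_le_length (hlen y)]
    exact hR x y (isChain_cons_cons.mp h).1

theorem IsChain.flatMap {R : β → β → Prop} {S : α → α → Prop} {f : β → List α}
    (hne : ∀ x, f x ≠ []) (hf : ∀ x, IsChain S (f x))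
    (hR : ∀ x y, R x y → S ((f x).getLast (hne x)) ((f y).head (hne y))) :
    ∀ {l : List β}, IsChain R l → IsChain S (l.flatMap f)
  | [], _ => by simp
  | [x], _ => by simpa using hf x
  | x :: y :: l, h => by
    rw [flatMap_cons]
    refine (hf x).append (IsChain.flatMap hne hf hR h.tail) ?_
    rw [getLast?_eq_some_getLast (hne x), flatMap_cons, head?_append,
      head?_eq_some_head (hne y)]
    simpa using hR x y (isChain_cons_cons.mp h).1

theorem IsChain.zip {R : α → α → Prop} {S : β → β → Prop} :
    ∀ {l₁ : List α} {l₂ : List β}, IsChain R l₁ → IsChain S l₂ →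
      IsChain (fun p q => R p.1 q.1 ∧ S p.2 q.2) (l₁.zip l₂)
  | a :: a' :: l₁, b :: b' :: l₂, h₁, h₂ => by
    rw [zip_cons_cons, zip_cons_cons, isChain_cons_cons, ← zip_cons_cons]
    exact ⟨⟨(isChain_cons_cons.mp h₁).1, (isChain_cons_cons.mp h₂).1⟩, h₁.tail.zip h₂.tail⟩
  | [], _, _, _ | _, [], _, _ => by simp
  | [_], _ :: _, _, _ | _ :: _, [_], _, _ => by simp

theorem isChain_flatMap_range_range {ℓ : ℕ} (hℓ : 0 < ℓ) (t : ℕ) :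
    IsChain (fun i j => (i + 1) % ℓ = j % ℓ) ((range t).flatMap fun _ => range ℓ) := by
  refine IsChain.flatMap (R := fun _ _ => True) (fun _ => by simp; omega)
    (fun _ => (isChain_range (fun i j => (i + 1) % ℓ = j % ℓ) ℓ).2 fun _ _ => rfl)
    (fun _ _ _ => ?_)
    ((isChain_range _ t).2 fun _ _ => trivial)
  simp only [getLast_range, head_range]
  rw [Nat.sub_add_cancel hℓ, Nat.mod_self, Nat.zero_mod]

end List

open List

section

variable {α β γ : Type*}

theorem circSeq_eq_flatMap_rotate (φ : List α) (t : ℕ) :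
    circSeq φ t = ((range t).flatMap fun _ => range φ.length).flatMap φ.rotate := by
  rw [circSeq, flatMap_assoc]

theorem wreathAux_flatMap {l : ℕ} {f : β → List α} {g : γ → List α}
    (hf : ∀ x, (f x).length = l) (hg : ∀ y, (g y).length = l) :
    ∀ {n : ℕ} {A : List β} {B : List γ}, n ≤ A.length → n ≤ B.length →
      wreathAux l n (A.flatMap f) (B.flatMap g) =
        ((A.zip B).take n).flatMap fun p => f p.1 ++ g p.2
  | 0, _, _, _, _ => rfl
  | n + 1, a :: A, b :: B, hA, hB => by
    simp only [wreathAux, flatMap_cons, take_left' (hf a), drop_left' (hf a), take_left' (hg b),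
      drop_left' (hg b), zip_cons_cons, take_succ_cons, append_assoc]
    rw [wreathAux_flatMap hf hg (by simpa using hA) (by simpa using hB)]

end

theorem length_hexKappa (x : Fin 6) : (hexKappa x).length = 3 := by
  revert x; decide

theorem length_hexIter (t : ℕ) : (hexIter t).length = 3 ^ t := by
  induction t with
  | zero => rfl
  | succ t ih => simp [hexIter, length_flatMap, length_hexKappa, ih, pow_succ]

/-- `x.val % 2` is the decoration of `x` (`0` for `ā`, `1` for `a̲`). Consecutive letters of every
`κ^t(1̄)` differ both in letter and in decoration, and this is what `κ` preserves. -/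
def HexAdjacent (x y : Fin 6) : Prop :=
  hexPi x ≠ hexPi y ∧ x.val % 2 ≠ y.val % 2

instance : DecidableRel HexAdjacent := fun x y => by unfold HexAdjacent; infer_instance

theorem hexKappa_ne_nil (x : Fin 6) : hexKappa x ≠ [] := by
  revert x; decide

theorem isChain_hexIter (t : ℕ) : IsChain HexAdjacent (hexIter t) := by
  induction t with
  | zero => exact isChain_singleton 0
  | succ t ih =>
    refine ih.flatMap hexKappa_ne_nil (by decide) ?_
    decide

def phi4Block (p : Fin 6 × ℕ) : List ℕ :=
  (hexKappa p.1).map (fun v => (hexPi v : ℕ) + 1) ++ [4, 5, 6].rotate p.2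

theorem phi4Block_eq_mod (x : Fin 6) (i : ℕ) : phi4Block (x, i) = phi4Block (x, i % 3) := by
  simp only [phi4Block, ← rotate_mod [4, 5, 6] i, length_cons, length_nil]

theorem phi4_succ (s : ℕ) : phi4 (s + 1) =
    (((hexIter s).zip ((range (3 ^ s)).flatMap fun _ => range 3)).take (3 ^ s)).flatMap
      phi4Block := by
  rw [phi4, Nat.add_sub_cancel, circSeq_eq_flatMap_rotate]
  convert wreathAux_flatMap (f := fun x => (hexKappa x).map fun v => (hexPi v : ℕ) + 1)
    (g := [4, 5, 6].rotate) (B := (range (3 ^ s)).flatMap fun _ => range 3)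
    (fun x => by simp [length_hexKappa]) (fun _ => length_rotate ..) (length_hexIter s).ge
    (by simp [length_flatMap]) using 2
  · rfl
  -- `phi4` coerces `hexK t : List (Fin 3)` to `List ℕ` through the list monad
  · simp only [hexK, hexIter, map_flatMap, pure_def, bind_eq_flatMap, flatMap_assoc,
      ← map_eq_flatMap, map_map, Function.comp_def]
  · rfl
  · rfl

theorem windowNodup_phi4Block (x : Fin 6) (i : ℕ) : WindowNodup 5 (phi4Block (x, i)) := by
  have : ∀ x : Fin 6, ∀ r < 3, WindowNodup 5 (phi4Block (x, r)) := by decide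
  rw [phi4Block_eq_mod]
  exact this x _ (Nat.mod_lt _ (by norm_num))

theorem windowNodup_phi4Block_append {x y : Fin 6} {i j : ℕ} (hxy : HexAdjacent x y)
    (hij : (i + 1) % 3 = j % 3) :
    WindowNodup 5 (phi4Block (x, i) ++ (phi4Block (y, j)).take 4) := by
  have : ∀ x y : Fin 6, HexAdjacent x y → ∀ r < 3,
      WindowNodup 5 (phi4Block (x, r) ++ (phi4Block (y, (r + 1) % 3)).take 4) := by decide
  rw [phi4Block_eq_mod x, phi4Block_eq_mod y, show j % 3 = (i % 3 + 1) % 3 by omega]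
  exact this x y hxy _ (Nat.mod_lt _ (by norm_num))

theorem length_phi4Block (p : Fin 6 × ℕ) : (phi4Block p).length = 6 := by
  simp [phi4Block, length_hexKappa]

/-- Every 5 consecutive terms of `φ₄ᵗ` are pairwise distinct. -/
theorem phi4_five_distinct (t : ℕ) (j : ℕ) :
    (((phi4 t).drop j).take 5).Nodup := by
  suffices WindowNodup 5 (phi4 t) from this j
  cases t with
  | zero => decide
  | succ s =>
    have hchain :=
      ((isChain_hexIter s).zip (isChain_flatMap_range_range three_pos (3 ^ s))).take (3 ^ s)
    rw [phi4_succ]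
    exact hchain.windowNodup_flatMap (fun p => by rw [length_phi4Block]; norm_num)
      (fun p => windowNodup_phi4Block p.1 p.2) (fun _ _ h => windowNodup_phi4Block_append h.1 h.2)
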